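/- Let n ≥ s ≥ 1 be integers. For all x, y ∈ ℂ^{n²} with supp(x) = supp(y) = Λ, |Λ| ≤ s, and ‖x‖₂ = ‖y‖₂ = 1, it holds that d₁(x,y) = ‖B(x) − B(y)‖_{2→2} ≤ 2s · ‖x − y‖₂. -/

import Mathlib

open MeasureTheory ProbabilityTheory Matrix

noncomputable section

/-- Cyclic translation on `ℂⁿ`: `(T h) q = h (q-1)`. -/
def Tmat (n : ℕ) : Matrix (Fin n) (Fin n) ℂ :=
  fun q j => if (j : ℕ) = ((q : ℕ) + (n - 1)) % n then 1 else 0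

/-- Modulation on `ℂⁿ`: `(M h) q = exp(2πiq/n) h q`. -/
def Mmat (n : ℕ) : Matrix (Fin n) (Fin n) ℂ :=
  Matrix.diagonal fun q => Complex.exp (2 * Real.pi * Complex.I * (q : ℕ) / n)

/-- Time-frequency shift `π(λ) = M^ℓ T^k` for `λ = (k, ℓ)`. -/
def pimat (n : ℕ) (lam : Fin n × Fin n) : Matrix (Fin n) (Fin n) ℂ :=
  Mmat n ^ (lam.2 : ℕ) * Tmat n ^ (lam.1 : ℕ)

/-- The matrix `A_q = (T^q | M T^q | ⋯ | M^{n-1} T^q)`: its column `λ = (k,ℓ)` is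
the `k`-th column of `M^ℓ T^q`. -/
def Amat (n : ℕ) (q : Fin n) : Matrix (Fin n) (Fin n × Fin n) ℂ :=
  fun r lam => (Mmat n ^ (lam.2 : ℕ) * Tmat n ^ (q : ℕ)) r lam.1

/-- The matrix `W_{q',q} = A_{q'}^* A_q` for `q' ≠ q`, and `0` for `q' = q`. -/
def Wmat (n : ℕ) (q' q : Fin n) : Matrix (Fin n × Fin n) (Fin n × Fin n) ℂ :=
  if q' = q then 0 else (Amat n q')ᴴ * Amat n q

/-- The matrix `B(x)` with entries `B(x)_{q',q} = x^* W_{q',q} x`. -/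
def Bmat (n : ℕ) (x : Fin n × Fin n → ℂ) : Matrix (Fin n) (Fin n) ℂ :=
  fun q' q => star x ⬝ᵥ (Wmat n q' q).mulVec x

/-- Euclidean (`ℓ₂`) norm of a finitely supported complex vector. -/
def euclNorm {ι : Type*} [Fintype ι] (x : ι → ℂ) : ℝ :=
  Real.sqrt (∑ i, ‖x i‖ ^ 2)

/-- Frobenius norm of a matrix. -/
def frobNorm {ι κ : Type*} [Fintype ι] [Fintype κ] (A : Matrix ι κ ℂ) : ℝ :=
  Real.sqrt (∑ i, ∑ j, ‖A i j‖ ^ 2)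

/-- Operator (`ℓ₂ → ℓ₂`) norm of a matrix. -/
def opNorm {ι κ : Type*} [Fintype ι] [Fintype κ] (A : Matrix ι κ ℂ) : ℝ :=
  sSup {c : ℝ | ∃ x : κ → ℂ, euclNorm x ≤ 1 ∧ c = euclNorm (A.mulVec x)}

open scoped Classical in
/-- Number of nonzero entries of a vector. -/
def sparsity {ι : Type*} [Fintype ι] (x : ι → ℂ) : ℕ :=
  (Finset.univ.filter fun j => x j ≠ 0).card

/-- `T_s`: unit-norm `s`-sparse vectors in `ℂ^{n²}`. -/
def sparseSphere (n s : ℕ) : Set (Fin n × Fin n → ℂ) :=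
  {x | euclNorm x = 1 ∧ sparsity x ≤ s}

/-- Covering number: minimal cardinality of a subset `S ⊆ T` such that every point of `T`
is within distance `u` (w.r.t. `d`) of a point of `S`. -/
def coveringNumber {α : Type*} (T : Set α) (d : α → α → ℝ) (u : ℝ) : ℝ :=
  sInf {N : ℝ | ∃ S : Finset α, ↑S ⊆ T ∧ (∀ x ∈ T, ∃ y ∈ S, d x y ≤ u) ∧ N = S.card}

/-- Restricted isometry constant of order `s` of the matrix `A`. -/
def ripConst {ι κ : Type*} [Fintype ι] [Fintype κ] (A : Matrix ι κ ℂ) (s : ℕ) : ℝ :=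
  sInf {δ : ℝ | 0 ≤ δ ∧ ∀ x : κ → ℂ, sparsity x ≤ s →
    (1 - δ) * euclNorm x ^ 2 ≤ euclNorm (A.mulVec x) ^ 2 ∧
      euclNorm (A.mulVec x) ^ 2 ≤ (1 + δ) * euclNorm x ^ 2}

/-- Gabor synthesis matrix: the column indexed by `λ` is `π(λ) g`. -/
def gaborMatrix (n : ℕ) (g : Fin n → ℂ) : Matrix (Fin n) (Fin n × Fin n) ℂ :=
  fun r lam => (pimat n lam).mulVec g r

/-- The Rademacher distribution on `ℂ`: values `±1` with probability `1/2` each. -/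
def rademacherMeasure : Measure ℂ :=
  (2 : ENNReal)⁻¹ • (Measure.dirac 1 + Measure.dirac (-1))

/-- The Steinhaus distribution: uniform distribution on the complex unit circle. -/
def steinhausMeasure : Measure ℂ :=
  Measure.map (fun t : ℝ => Complex.exp (2 * Real.pi * t * Complex.I))
    (volume.restrict (Set.Ioc (0 : ℝ) 1))

/-- `ε` is a Rademacher sequence: independent entries, each `±1` with probability 1/2. -/
def IsRademacherVec {Ω : Type*} [MeasurableSpace Ω] (μ : Measure Ω) {n : ℕ}
    (ε : Ω → Fin n → ℂ) : Prop :=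
  iIndepFun (fun q ω => ε ω q) μ ∧
    ∀ q, μ.map (fun ω => ε ω q) = rademacherMeasure

/-- `ε` is a Steinhaus sequence: independent entries, each uniform on the unit circle. -/
def IsSteinhausVec {Ω : Type*} [MeasurableSpace Ω] (μ : Measure Ω) {n : ℕ}
    (ε : Ω → Fin n → ℂ) : Prop :=
  iIndepFun (fun q ω => ε ω q) μ ∧
    ∀ q, μ.map (fun ω => ε ω q) = steinhausMeasure

end

/-!
Expanding the quadratic forms, `B(x) - B(y) = ∑_{λ',λ} (x̄_{λ'} x_λ - ȳ_{λ'} y_λ) D_{λ',λ}` where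
`(D_{λ',λ})_{q',q} = (W_{q',q})_{λ',λ}` (`Wslice` below). The column `λ = (k, ℓ)` of `A_q` has a
single nonzero entry, of modulus one, in row `k + q`; hence `D_{λ',λ}` vanishes off the permutation
`q' ↦ q' + k' - k` and has entries of modulus at most one, so it is a contraction of `ℓ₂`.
The coefficients have `ℓ₁`-norm at most `(‖x‖₁ + ‖y‖₁) ‖x - y‖₁`, and Cauchy–Schwarz on the
common support of size `≤ s` bounds this by `2√s · √s ‖x - y‖₂`.
-/

section EuclNorm

variable {ι κ : Type*} [Fintype ι] [Fintype κ]

lemma euclNorm_eq_norm_toLp (x : ι → ℂ) : euclNorm x = ‖WithLp.toLp 2 x‖ := by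
  rw [EuclideanSpace.norm_eq]
  rfl

lemma euclNorm_mulVec_le_of_perm (D : Matrix ι κ ℂ) (e : ι ≃ κ)
    (h0 : ∀ i j, j ≠ e i → D i j = 0) (h1 : ∀ i j, ‖D i j‖ ≤ 1) (v : κ → ℂ) :
    euclNorm (D *ᵥ v) ≤ euclNorm v := by
  have hrow : ∀ i, (D *ᵥ v) i = D i (e i) * v (e i) := fun i =>
    Finset.sum_eq_single (e i) (fun j _ hj => by simp [h0 i j hj]) (by simp)
  unfold euclNorm
  gcongr
  calc ∑ i, ‖(D *ᵥ v) i‖ ^ 2 ≤ ∑ i, ‖v (e i)‖ ^ 2 := by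
        gcongr with i
        rw [hrow, norm_mul]
        exact mul_le_of_le_one_left (norm_nonneg _) (h1 _ _)
    _ = ∑ j, ‖v j‖ ^ 2 := e.sum_comp fun j => ‖v j‖ ^ 2

lemma opNorm_sum_smul_le {α : Type*} (s : Finset α) (c : α → ℂ) (D : α → Matrix ι κ ℂ)
    (hD : ∀ a v, euclNorm (D a *ᵥ v) ≤ euclNorm v) :
    opNorm (∑ a ∈ s, c a • D a) ≤ ∑ a ∈ s, ‖c a‖ := by
  refine Real.sSup_le ?_ (by positivity)
  rintro _ ⟨v, hv, rfl⟩
  calc euclNorm ((∑ a ∈ s, c a • D a) *ᵥ v)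
      ≤ ∑ a ∈ s, ‖c a‖ * euclNorm (D a *ᵥ v) := by
        simp only [euclNorm_eq_norm_toLp, Matrix.sum_mulVec, Matrix.smul_mulVec,
          WithLp.toLp_sum, WithLp.toLp_smul, ← norm_smul]
        exact norm_sum_le _ _
    _ ≤ ∑ a ∈ s, ‖c a‖ := by
        gcongr with a
        exact mul_le_of_le_one_right (norm_nonneg _) ((hD a v).trans hv)

end EuclNorm

section Sparsity

variable {ι : Type*} [Fintype ι]

lemma sparsity_mono {x y : ι → ℂ} (h : Function.support x ⊆ Function.support y) :
    sparsity x ≤ sparsity y :=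
  Finset.card_le_card fun i hi => by simpa using h (by simpa using hi)

lemma sum_norm_le_sqrt_mul_euclNorm {x : ι → ℂ} {s : ℕ} (h : sparsity x ≤ s) :
    ∑ i, ‖x i‖ ≤ √s * euclNorm x := by
  classical
  calc ∑ i, ‖x i‖ = ∑ i, (if x i ≠ 0 then 1 else 0) * ‖x i‖ := by
        congr 1 with i
        split_ifs with hi <;> simp_all
    _ ≤ √(∑ i, (if x i ≠ 0 then 1 else 0 : ℝ) ^ 2) * euclNorm x :=
        Real.sum_mul_le_sqrt_mul_sqrt _ _ _
    _ ≤ √s * euclNorm x := by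
        refine mul_le_mul_of_nonneg_right (Real.sqrt_le_sqrt ?_) (Real.sqrt_nonneg _)
        simp only [ite_pow, one_pow, zero_pow two_ne_zero, Finset.sum_boole]
        exact_mod_cast (show _ ≤ s by convert h using 1; unfold sparsity; congr)

lemma sum_norm_star_mul_sub_le (x y : ι → ℂ) :
    ∑ p : ι × ι, ‖star (x p.1) * x p.2 - star (y p.1) * y p.2‖ ≤
      (∑ i, ‖x i‖ + ∑ i, ‖y i‖) * ∑ i, ‖(x - y) i‖ := by
  calc ∑ p : ι × ι, ‖star (x p.1) * x p.2 - star (y p.1) * y p.2‖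
      ≤ ∑ p : ι × ι, (‖x p.1‖ * ‖(x - y) p.2‖ + ‖(x - y) p.1‖ * ‖y p.2‖) := by
        gcongr with p
        have : star (x p.1) * x p.2 - star (y p.1) * y p.2 =
            star (x p.1) * (x - y) p.2 + star ((x - y) p.1) * y p.2 := by
          simp only [Pi.sub_apply, star_sub]
          ring
        rw [this]
        refine (norm_add_le _ _).trans_eq ?_
        simp only [norm_mul, norm_star]
    _ = (∑ i, ‖x i‖ + ∑ i, ‖y i‖) * ∑ i, ‖(x - y) i‖ := by
        simp only [Fintype.sum_prod_type, Finset.sum_add_distrib, ← Finset.sum_mul_sum]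
        ring

end Sparsity

section Gabor

variable {n : ℕ}

lemma Tmat_apply [NeZero n] (r j : Fin n) : Tmat n r j = if j + 1 = r then 1 else 0 := by
  have hn : 0 < n := r.pos
  have : (j : ℕ) = ((r : ℕ) + (n - 1)) % n ↔ j + 1 = r := by
    rw [Fin.ext_iff, Fin.val_add, Fin.val_one', Nat.add_mod_mod]
    constructor
    · intro h
      rw [h, Nat.mod_add_mod, add_assoc, Nat.sub_add_cancel hn, Nat.add_mod_right,
        Nat.mod_eq_of_lt r.isLt]
    · intro h
      rw [← h, Nat.mod_add_mod, add_assoc, Nat.add_sub_cancel' hn, Nat.add_mod_right,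
        Nat.mod_eq_of_lt j.isLt]
  simp only [Tmat, this]

lemma Tmat_pow_apply [NeZero n] (m : ℕ) (r j : Fin n) :
    (Tmat n ^ m) r j = if (j + m) % n = r then 1 else 0 := by
  induction m generalizing j with
  | zero => simp [Matrix.one_apply, eq_comm, Fin.ext_iff, Nat.mod_eq_of_lt j.isLt]
  | succ m ih =>
    rw [pow_succ, Matrix.mul_apply, Finset.sum_eq_single (j + 1)]
    · simp [Tmat_apply, ih, Fin.val_add, Nat.add_mod_mod, Nat.mod_add_mod, add_right_comm,
        add_assoc]
    · intro k _ hk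
      simp [Tmat_apply, hk.symm]
    · simp

lemma Amat_apply (q r : Fin n) (lam : Fin n × Fin n) :
    Amat n q r lam =
      Complex.exp (2 * Real.pi * Complex.I * (r : ℕ) / n) ^ (lam.2 : ℕ) *
        if lam.1 + q = r then 1 else 0 := by
  have : NeZero n := NeZero.of_pos r.pos
  simp [Amat, Mmat, Matrix.diagonal_pow, Matrix.diagonal_mul, Tmat_pow_apply, Fin.ext_iff,
    Fin.val_add]

lemma Amat_apply_eq_zero {q r : Fin n} {lam : Fin n × Fin n} (h : lam.1 + q ≠ r) :
    Amat n q r lam = 0 := by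
  simp [Amat_apply, h]

lemma norm_Amat_apply_le (q r : Fin n) (lam : Fin n × Fin n) : ‖Amat n q r lam‖ ≤ 1 := by
  have hexp : ‖Complex.exp (2 * Real.pi * Complex.I * (r : ℕ) / n)‖ = 1 := by
    simp [Complex.norm_exp]
  rw [Amat_apply, norm_mul, norm_pow, hexp, one_pow, one_mul]
  split_ifs <;> simp

lemma conjTranspose_Amat_mul_Amat_apply (q' q : Fin n) (l' l : Fin n × Fin n) :
    ((Amat n q')ᴴ * Amat n q) l' l = star (Amat n q' (l.1 + q) l') * Amat n q (l.1 + q) l := by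
  rw [Matrix.mul_apply]
  exact Finset.sum_eq_single (l.1 + q) (fun r _ hr => by simp [Amat_apply_eq_zero hr.symm])
    (by simp)

lemma Wmat_apply_eq_zero {q' q : Fin n} {l' l : Fin n × Fin n} (h : q' + l'.1 ≠ q + l.1) :
    Wmat n q' q l' l = 0 := by
  unfold Wmat
  split_ifs
  · rfl
  · rw [conjTranspose_Amat_mul_Amat_apply,
      Amat_apply_eq_zero (by rwa [add_comm l'.1, add_comm l.1]), star_zero, zero_mul]

lemma norm_Wmat_apply_le (q' q : Fin n) (l' l : Fin n × Fin n) : ‖Wmat n q' q l' l‖ ≤ 1 := by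
  unfold Wmat
  split_ifs
  · simp
  · rw [conjTranspose_Amat_mul_Amat_apply, norm_mul, norm_star]
    exact mul_le_one₀ (norm_Amat_apply_le _ _ _) (norm_nonneg _) (norm_Amat_apply_le _ _ _)

noncomputable def Wslice (n : ℕ) (l' l : Fin n × Fin n) : Matrix (Fin n) (Fin n) ℂ :=
  Matrix.of fun q' q => Wmat n q' q l' l

lemma euclNorm_Wslice_mulVec_le (l' l : Fin n × Fin n) (v : Fin n → ℂ) :
    euclNorm (Wslice n l' l *ᵥ v) ≤ euclNorm v := by
  rcases n with _ | n
  · simp [euclNorm]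
  exact euclNorm_mulVec_le_of_perm _ (Equiv.addRight (l'.1 - l.1))
    (fun q' q hq => Wmat_apply_eq_zero fun h => hq (by simp [← add_sub_assoc, h]))
    (fun q' q => norm_Wmat_apply_le q' q l' l) v

lemma Bmat_eq_sum (x : Fin n × Fin n → ℂ) :
    Bmat n x =
      ∑ p : (Fin n × Fin n) × (Fin n × Fin n), (star (x p.1) * x p.2) • Wslice n p.1 p.2 := by
  ext q' q
  simp only [Bmat, dotProduct, Matrix.mulVec, Finset.mul_sum, Matrix.sum_apply, Matrix.smul_apply,
    Wslice, Matrix.of_apply, smul_eq_mul, Fintype.sum_prod_type, Pi.star_apply, mul_assoc,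
    mul_comm (Wmat n q' q _ _)]

end Gabor

theorem d1_lipschitz_general (n s : ℕ) (x y : Fin n × Fin n → ℂ)
    (hsupp : Function.support x = Function.support y) (hcard : sparsity x ≤ s)
    (hx : euclNorm x = 1) (hy : euclNorm y = 1) :
    opNorm (Bmat n x - Bmat n y) ≤ 2 * s * euclNorm (x - y) := by
  have hcard_y : sparsity y ≤ s := (sparsity_mono hsupp.ge).trans hcard
  have hcard_sub : sparsity (x - y) ≤ s := by
    refine (sparsity_mono (Function.support_subset_iff'.2 fun i hi => ?_)).trans hcard
    have hyi : y i = 0 := Function.notMem_support.1 (hsupp ▸ hi)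
    simp [Function.notMem_support.1 hi, hyi]
  calc opNorm (Bmat n x - Bmat n y)
      = opNorm (∑ p : (Fin n × Fin n) × (Fin n × Fin n),
          (star (x p.1) * x p.2 - star (y p.1) * y p.2) • Wslice n p.1 p.2) := by
        simp only [Bmat_eq_sum, sub_smul, Finset.sum_sub_distrib]
    _ ≤ ∑ p : (Fin n × Fin n) × (Fin n × Fin n), ‖star (x p.1) * x p.2 - star (y p.1) * y p.2‖ :=
        opNorm_sum_smul_le _ _ _ fun p => euclNorm_Wslice_mulVec_le p.1 p.2
    _ ≤ (∑ i, ‖x i‖ + ∑ i, ‖y i‖) * ∑ i, ‖(x - y) i‖ := sum_norm_star_mul_sub_le x y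
    _ ≤ (√s * 1 + √s * 1) * (√s * euclNorm (x - y)) := by
        gcongr
        · exact hx ▸ sum_norm_le_sqrt_mul_euclNorm hcard
        · exact hy ▸ sum_norm_le_sqrt_mul_euclNorm hcard_y
        · exact sum_norm_le_sqrt_mul_euclNorm hcard_sub
    _ = 2 * (√s * √s) * euclNorm (x - y) := by ring
    _ = 2 * s * euclNorm (x - y) := by rw [Real.mul_self_sqrt (Nat.cast_nonneg s)]

/-- `d₁(x,y) ≤ 2 s ‖x-y‖₂` for unit-norm vectors with common support of size at most `s`. -/
theorem d1_lipschitz (n s : ℕ) (hs : 1 ≤ s) (hsn : s ≤ n) (x y : Fin n × Fin n → ℂ)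
    (hsupp : Function.support x = Function.support y) (hcard : sparsity x ≤ s)
    (hx : euclNorm x = 1) (hy : euclNorm y = 1) :
    opNorm (Bmat n x - Bmat n y) ≤ 2 * s * euclNorm (x - y) :=
  d1_lipschitz_general n s x y hsupp hcard hx hy
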